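/- Let n ≥ 2 and let f = p/q : ℂⁿ ⇢ ℂᴺ be a nonconstant rational map in lowest terms that maps two distinct zero-centered spheres (of radii r₁ ≠ r₂, r_j > 0) into zero-centered spheres of radii R₁, R₂ > 0 and is holomorphic on the closed ball of radius max(r₁,r₂). Then deg q < deg p. -/

import Mathlib

open Metric Polynomial MvPolynomial

lemma circle_infinite (r : ℝ) (hr : 0 < r) : {t : ℂ | ‖t‖ = r}.Infinite := by
  have hIoo : (Set.Ioo (0:ℝ) 1).Infinite := Set.Ioo_infinite (by norm_num)
  have hinj : Set.InjOn (fun x : ℝ => (r:ℂ) * Complex.exp (x * Complex.I)) (Set.Ioo 0 1) := by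
    intro x hx y hy hxy
    simp only at hxy
    have hrne : (r:ℂ) ≠ 0 := by exact_mod_cast hr.ne'
    have h2 : Complex.exp (x * Complex.I) = Complex.exp (y * Complex.I) :=
      mul_left_cancel₀ hrne hxy
    rw [Complex.exp_eq_exp_iff_exists_int] at h2
    obtain ⟨k, hk⟩ := h2
    have hreal : x = y + k * (2 * Real.pi) := by
      have := congrArg Complex.im hk
      simpa using this
    have hpi := Real.pi_gt_three
    have hb : |x - y| < 1 := by
      rw [abs_lt]; constructor <;> nlinarith [hx.1, hx.2, hy.1, hy.2]
    have hk0 : k = 0 := by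
      by_contra hk0
      have h1 : (1:ℝ) ≤ |(k:ℝ)| := by
        exact_mod_cast Int.one_le_abs (by exact_mod_cast hk0)
      have h2 : |x - y| = |(k:ℝ)| * (2 * Real.pi) := by
        rw [hreal]
        rw [show y + k * (2*Real.pi) - y = k * (2*Real.pi) by ring, abs_mul,
          abs_of_pos (by positivity : (0:ℝ) < 2*Real.pi)]
      nlinarith
    rw [hreal, hk0]; norm_num
  have himg := (hIoo.image hinj)
  refine himg.mono ?_
  rintro t ⟨x, hx, rfl⟩
  simp only [Set.mem_setOf_eq, norm_mul, Complex.norm_real,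
    Complex.norm_exp_ofReal_mul_I]
  simp [abs_of_pos hr, Real.norm_eq_abs]

lemma poly_zero_of_circle (A : Polynomial ℂ) (r : ℝ) (hr : 0 < r)
    (h : ∀ t : ℂ, ‖t‖ = r → A.eval t = 0) : A = 0 := by
  apply Polynomial.eq_zero_of_infinite_isRoot
  exact (circle_infinite r hr).mono (fun t ht => h t ht)

lemma deg_sum {n : ℕ} (m : Fin n →₀ ℕ) : m.degree = m.sum fun _ e => e := by
  rw [Finsupp.degree, Finsupp.sum]
  rfl

noncomputable def lineComp {n : ℕ} (g : MvPolynomial (Fin n) ℂ) (v : Fin n → ℂ) :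
    Polynomial ℂ :=
  MvPolynomial.aeval (fun j => Polynomial.C (v j) * Polynomial.X) g

lemma eval_lineComp {n : ℕ} (g : MvPolynomial (Fin n) ℂ) (v : Fin n → ℂ) (t : ℂ) :
    (lineComp g v).eval t = MvPolynomial.eval (fun j => v j * t) g := by
  induction g using MvPolynomial.induction_on with
  | C a => simp [lineComp]
  | add p q hp hq =>
    rw [lineComp, map_add, Polynomial.eval_add, ← lineComp, ← lineComp, hp, hq, map_add]
  | mul_X p j hp =>
    rw [lineComp, map_mul, MvPolynomial.aeval_X, Polynomial.eval_mul, Polynomial.eval_mul,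
      Polynomial.eval_C, Polynomial.eval_X, ← lineComp, hp, map_mul, MvPolynomial.eval_X]

lemma lineComp_eq_sum {n : ℕ} (g : MvPolynomial (Fin n) ℂ) (v : Fin n → ℂ) :
    lineComp g v = ∑ m ∈ g.support,
      Polynomial.C (MvPolynomial.coeff m g * ∏ j, v j ^ m j) *
        Polynomial.X ^ (m.sum fun _ e => e) := by
  conv_lhs => rw [lineComp, ← MvPolynomial.support_sum_monomial_coeff g]
  rw [map_sum]
  apply Finset.sum_congr rfl
  intro m hm
  rw [MvPolynomial.aeval_monomial]
  rw [Finsupp.prod]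
  have : ∏ j ∈ m.support, (Polynomial.C (v j) * Polynomial.X) ^ m j
      = Polynomial.C (∏ j ∈ m.support, v j ^ m j) * Polynomial.X ^ (m.sum fun _ e => e) := by
    rw [Finset.prod_congr rfl (fun j _ => mul_pow (Polynomial.C (v j)) Polynomial.X (m j))]
    rw [Finset.prod_mul_distrib]
    simp_rw [← map_pow]
    rw [← map_prod, Finset.prod_pow_eq_pow_sum]
    rw [Finsupp.sum]
  rw [this]
  have hprod : (∏ j ∈ m.support, v j ^ m j) = ∏ j, v j ^ m j := by
    apply Finset.prod_subset (Finset.subset_univ _)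
    intro j _ hj
    rw [Finsupp.notMem_support_iff.mp hj, pow_zero]
  rw [hprod]
  simp [Algebra.smul_def]
  ring

lemma natDegree_lineComp_le {n : ℕ} (g : MvPolynomial (Fin n) ℂ) (v : Fin n → ℂ) :
    (lineComp g v).natDegree ≤ g.totalDegree := by
  rw [lineComp_eq_sum]
  apply Polynomial.natDegree_sum_le_of_forall_le
  intro m hm
  refine (Polynomial.natDegree_C_mul_le _ _).trans ?_
  refine (Polynomial.natDegree_X_pow_le _).trans ?_
  exact MvPolynomial.le_totalDegree hm

lemma coeff_lineComp {n : ℕ} (g : MvPolynomial (Fin n) ℂ) (v : Fin n → ℂ) (d : ℕ) :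
    (lineComp g v).coeff d
      = MvPolynomial.eval v (MvPolynomial.homogeneousComponent d g) := by
  rw [lineComp_eq_sum, MvPolynomial.homogeneousComponent_apply, map_sum,
    Polynomial.finset_sum_coeff]
  rw [Finset.sum_filter]
  apply Finset.sum_congr rfl
  intro m hm
  rw [Polynomial.coeff_C_mul, Polynomial.coeff_X_pow]
  by_cases h : m.degree = d
  · have h' : d = (m.sum fun _ e => e) := by rw [← deg_sum, h]
    rw [if_pos h, if_pos h', MvPolynomial.eval_monomial, mul_one, Finsupp.prod_pow]
  · have h' : ¬ d = (m.sum fun _ e => e) := by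
      intro hc; exact h (by rw [deg_sum, ← hc])
    rw [if_neg h, if_neg h', mul_zero]

lemma exists_good_dir {n : ℕ} (hn : 0 < n) (q : MvPolynomial (Fin n) ℂ) (hq : q ≠ 0) :
    ∃ v : Fin n → ℂ, v ≠ 0 ∧ (lineComp q v).coeff q.totalDegree ≠ 0 := by
  set d := q.totalDegree with hd
  have hne : q.support.Nonempty := by
    rw [MvPolynomial.support_nonempty]; exact hq
  obtain ⟨m₀, hm₀, hdeg⟩ := Finset.exists_mem_eq_sup q.support hne
    (fun s => s.sum fun _ e => e)
  have hdeg' : m₀.degree = d := by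
    rw [deg_sum, hd, MvPolynomial.totalDegree, hdeg]
  have hH : MvPolynomial.homogeneousComponent d q ≠ 0 := by
    intro h0
    have := congrArg (MvPolynomial.coeff m₀) h0
    rw [MvPolynomial.coeff_homogeneousComponent, if_pos hdeg'] at this
    exact (MvPolynomial.mem_support_iff.mp hm₀) (by simpa using this)
  have : ∃ v : Fin n → ℂ, MvPolynomial.eval v (MvPolynomial.homogeneousComponent d q) ≠ 0 := by
    by_contra hc
    push_neg at hc
    exact hH (MvPolynomial.funext (fun x => by rw [hc x, map_zero]))
  obtain ⟨v₀, hv₀⟩ := this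
  by_cases hv : v₀ = 0
  · subst hv
    have hd0 : d = 0 := by
      by_contra hd0
      apply hv₀
      have h1 : MvPolynomial.eval (0 : Fin n → ℂ) (MvPolynomial.homogeneousComponent d q)
          = MvPolynomial.coeff 0 (MvPolynomial.homogeneousComponent d q) := by
        rw [MvPolynomial.eval_zero, MvPolynomial.constantCoeff_eq]
      rw [h1, MvPolynomial.coeff_homogeneousComponent, if_neg]
      rw [map_zero]
      omega
    refine ⟨fun _ => 1, ?_, ?_⟩
    · intro h
      have := congrFun h ⟨0, hn⟩
      simp at this
    · rw [coeff_lineComp]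
      rw [hd0] at hv₀ ⊢
      rw [MvPolynomial.homogeneousComponent_zero] at hv₀ ⊢
      simpa using hv₀
  · exact ⟨v₀, hv, by rw [coeff_lineComp]; exact hv₀⟩

noncomputable def evalPoly {n N : ℕ} (P : Fin N → MvPolynomial (Fin n) ℂ)
    (z : EuclideanSpace ℂ (Fin n)) : EuclideanSpace ℂ (Fin N) :=
  WithLp.toLp 2 (fun i => MvPolynomial.eval (fun j => z j) (P i))

noncomputable def ratMap {n N : ℕ} (P : Fin N → MvPolynomial (Fin n) ℂ)
    (q : MvPolynomial (Fin n) ℂ) (z : EuclideanSpace ℂ (Fin n)) :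
    EuclideanSpace ℂ (Fin N) :=
  (MvPolynomial.eval (fun j => z j) q)⁻¹ • evalPoly P z

lemma differentiable_mv {n : ℕ} (g : MvPolynomial (Fin n) ℂ) :
    Differentiable ℂ (fun z : EuclideanSpace ℂ (Fin n) =>
      MvPolynomial.eval (fun j => z j) g) := by
  induction g using MvPolynomial.induction_on with
  | C a => simpa using differentiable_const a
  | add p q hp hq => simp only [map_add]; exact hp.add hq
  | mul_X p j hp =>
    simp only [map_mul, MvPolynomial.eval_X]
    have hj : Differentiable ℂ (fun z : EuclideanSpace ℂ (Fin n) => z j) :=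
      (EuclideanSpace.proj j : EuclideanSpace ℂ (Fin n) →L[ℂ] ℂ).differentiable
    exact hp.mul hj

lemma differentiable_evalPoly {n N : ℕ} (P : Fin N → MvPolynomial (Fin n) ℂ) :
    Differentiable ℂ (evalPoly P) := by
  have : Differentiable ℂ (fun z : EuclideanSpace ℂ (Fin n) =>
      (fun i => MvPolynomial.eval (fun j => z j) (P i) : Fin N → ℂ)) :=
    differentiable_pi.mpr (fun i => differentiable_mv (P i))
  have h2 := ((PiLp.continuousLinearEquiv 2 ℂ (fun _ : Fin N => ℂ)).symm
      : (Fin N → ℂ) →L[ℂ] EuclideanSpace ℂ (Fin N)).differentiable.comp this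
  exact h2

lemma differentiableAt_ratMap {n N : ℕ} (P : Fin N → MvPolynomial (Fin n) ℂ)
    (q : MvPolynomial (Fin n) ℂ) (z : EuclideanSpace ℂ (Fin n))
    (hz : MvPolynomial.eval (fun j => z j) q ≠ 0) :
    DifferentiableAt ℂ (ratMap P q) z := by
  have h1 : DifferentiableAt ℂ (fun z : EuclideanSpace ℂ (Fin n) =>
      (MvPolynomial.eval (fun j => z j) q)⁻¹) z :=
    ((differentiable_mv q).differentiableAt).inv hz
  exact h1.smul ((differentiable_evalPoly P).differentiableAt)

lemma constant_of_eq_radii {n N : ℕ} (hn : 0 < n)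
    (P : Fin N → MvPolynomial (Fin n) ℂ) (q : MvPolynomial (Fin n) ℂ)
    (r₁ r₂ R : ℝ) (hr₁ : 0 < r₁) (h12 : r₁ < r₂)
    (hq : ∀ z : EuclideanSpace ℂ (Fin n), ‖z‖ ≤ r₂ →
      MvPolynomial.eval (fun i => z i) q ≠ 0)
    (hs₁ : ∀ z : EuclideanSpace ℂ (Fin n), ‖z‖ = r₁ → ‖ratMap P q z‖ = R)
    (hs₂ : ∀ z : EuclideanSpace ℂ (Fin n), ‖z‖ = r₂ → ‖ratMap P q z‖ = R) :
    ∃ w : EuclideanSpace ℂ (Fin N), ∀ z : EuclideanSpace ℂ (Fin n),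
      MvPolynomial.eval (fun i => z i) q ≠ 0 → ratMap P q z = w := by
  have hr₂ : (0:ℝ) < r₂ := hr₁.trans h12
  haveI : Nontrivial (EuclideanSpace ℂ (Fin n)) := by
    refine ⟨⟨EuclideanSpace.single ⟨0, hn⟩ (1:ℂ), 0, ?_⟩⟩
    intro h
    have := congrArg norm h
    rw [EuclideanSpace.norm_single] at this
    simp at this
  set f := ratMap P q with hf
  have hdiff : DifferentiableOn ℂ f (closedBall (0 : EuclideanSpace ℂ (Fin n)) r₂) := by
    intro z hz
    exact (differentiableAt_ratMap P q z (hq z (by simpa [dist_eq_norm] using hz))).differentiableWithinAt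
  -- max modulus bound on closed ball
  have hball : ∀ z ∈ closedBall (0 : EuclideanSpace ℂ (Fin n)) r₂, ‖f z‖ ≤ R := by
    intro z hz
    have hcl : closure (ball (0 : EuclideanSpace ℂ (Fin n)) r₂) = closedBall 0 r₂ :=
      closure_ball 0 hr₂.ne'
    refine Complex.norm_le_of_forall_mem_frontier_norm_le
      (U := ball (0 : EuclideanSpace ℂ (Fin n)) r₂) isBounded_ball ?_ ?_ ?_
    · exact DifferentiableOn.diffContOnCl (by rw [hcl]; exact hdiff)
    · intro w hw
      rw [frontier_ball 0 hr₂.ne'] at hw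
      exact le_of_eq (hs₂ w (by simpa [dist_eq_norm] using hw))
    · rw [hcl]; exact hz
  -- point on inner sphere
  have hpos : (0:ℕ) < n := hn
  set e₀ : EuclideanSpace ℂ (Fin n) := EuclideanSpace.single ⟨0, hn⟩ (1:ℂ) with he₀
  set z₀ : EuclideanSpace ℂ (Fin n) := (r₁ : ℂ) • e₀ with hz₀
  have hz₀norm : ‖z₀‖ = r₁ := by
    rw [hz₀, norm_smul, he₀, EuclideanSpace.norm_single]
    simp [abs_of_pos hr₁]
  have hz₀mem : z₀ ∈ ball (0 : EuclideanSpace ℂ (Fin n)) r₂ := by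
    simp [dist_eq_norm, hz₀norm, h12]
  have hmax : IsMaxOn (norm ∘ f) (ball (0 : EuclideanSpace ℂ (Fin n)) r₂) z₀ := by
    intro z hz
    simp only [Function.comp_apply, Set.mem_setOf_eq]
    rw [hs₁ z₀ hz₀norm]
    exact hball z (ball_subset_closedBall hz)
  have heq : Set.EqOn f (Function.const _ (f z₀)) (ball (0 : EuclideanSpace ℂ (Fin n)) r₂) :=
    Complex.eqOn_of_isPreconnected_of_isMaxOn_norm
      (convex_ball _ _).isPreconnected isOpen_ball
      (hdiff.mono ball_subset_closedBall) hz₀mem hmax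
  set w := f z₀ with hw
  -- polynomial identities on the ball
  have hpoly : ∀ i : Fin N, ∀ z : EuclideanSpace ℂ (Fin n),
      MvPolynomial.eval (fun j => z j) (P i - MvPolynomial.C (w i) * q) = 0 := by
    intro i
    -- first on the ball
    have hball0 : ∀ z : EuclideanSpace ℂ (Fin n), ‖z‖ < r₂ →
        MvPolynomial.eval (fun j => z j) (P i - MvPolynomial.C (w i) * q) = 0 := by
      intro z hz
      have hzmem : z ∈ ball (0 : EuclideanSpace ℂ (Fin n)) r₂ := by
        simp [dist_eq_norm, hz]
      have hqz : MvPolynomial.eval (fun j => z j) q ≠ 0 :=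
        hq z (le_of_lt hz)
      have hfz : f z i = w i := by rw [heq hzmem]; rfl
      have hcomp : (MvPolynomial.eval (fun j => z j) q)⁻¹
          * MvPolynomial.eval (fun j => z j) (P i) = w i := hfz
      have hPi : MvPolynomial.eval (fun j => z j) (P i)
          = w i * MvPolynomial.eval (fun j => z j) q := by
        field_simp at hcomp
        linear_combination hcomp
      simp only [map_sub, map_mul, MvPolynomial.eval_C, hPi]
      ring
    -- extend to all of ℂⁿ via lines
    intro z
    by_cases hz : z = 0
    · exact hball0 z (by simp [hz, hr₂])
    · have hznorm : (0:ℝ) < ‖z‖ := norm_pos_iff.mpr hz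
      set g := P i - MvPolynomial.C (w i) * q with hg
      set A := lineComp g (fun j => z j) with hA
      have hAzero : A = 0 := by
        apply poly_zero_of_circle A (r₁ / ‖z‖) (by positivity)
        intro t ht
        rw [hA, eval_lineComp]
        have : (fun j => (z j) * t) = (fun j => (t • z : EuclideanSpace ℂ (Fin n)) j) := by
          funext j
          simp [mul_comm]
        rw [this]
        apply hball0
        rw [norm_smul, ht]
        calc r₁ / ‖z‖ * ‖z‖ = r₁ := by field_simp
          _ < r₂ := h12
      have := congrArg (Polynomial.eval (1:ℂ)) hAzero
      rw [hA, eval_lineComp] at this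
      simpa using this
  refine ⟨w, fun z hqz => ?_⟩
  ext i
  have h0 := hpoly i z
  simp only [map_sub, map_mul, MvPolynomial.eval_C, sub_eq_zero] at h0
  show (MvPolynomial.eval (fun j => z j) q)⁻¹ * MvPolynomial.eval (fun j => z j) (P i) = w i
  rw [h0]
  field_simp



noncomputable def mir (A : Polynomial ℂ) (c : ℂ) (M : ℕ) : Polynomial ℂ :=
  ∑ k ∈ Finset.range (M+1), Polynomial.monomial (M - k) ((starRingEnd ℂ) (A.coeff k) * c ^ k)

lemma mir_natDegree_le (A : Polynomial ℂ) (c : ℂ) (M : ℕ) : (mir A c M).natDegree ≤ M := by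
  apply Polynomial.natDegree_sum_le_of_forall_le
  intro k hk
  exact (Polynomial.natDegree_monomial_le _).trans (Nat.sub_le _ _)

lemma mir_coeff_top (A : Polynomial ℂ) (c : ℂ) (M : ℕ) :
    (mir A c M).coeff M = (starRingEnd ℂ) (A.coeff 0) := by
  rw [mir, Polynomial.finset_sum_coeff]
  rw [Finset.sum_eq_single 0]
  · simp
  · intro k hk hk0
    rw [Finset.mem_range] at hk
    rw [Polynomial.coeff_monomial, if_neg (by omega)]
  · intro h
    simp at h

lemma mir_eval (A : Polynomial ℂ) (r : ℝ) (M : ℕ) (hA : A.natDegree ≤ M) (t : ℂ)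
    (ht : ‖t‖ = r) :
    (mir A ((r:ℂ)^2) M).eval t = t ^ M * (starRingEnd ℂ) (A.eval t) := by
  have hc : (r:ℂ)^2 = t * (starRingEnd ℂ) t := by
    rw [Complex.mul_conj, Complex.normSq_eq_norm_sq, ht]
    push_cast; ring
  have hev : A.eval t = ∑ k ∈ Finset.range (M+1), A.coeff k * t ^ k :=
    Polynomial.eval_eq_sum_range' (Nat.lt_succ_of_le hA) t
  rw [mir, Polynomial.eval_finset_sum]
  rw [hev, map_sum, Finset.mul_sum]
  apply Finset.sum_congr rfl
  intro k hk
  rw [Finset.mem_range] at hk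
  have hkM : k ≤ M := Nat.lt_succ_iff.mp hk
  rw [Polynomial.eval_monomial, hc, map_mul, map_pow]
  rw [show (t * (starRingEnd ℂ) t) ^ k = t ^ k * ((starRingEnd ℂ) t) ^ k by ring]
  have : t ^ (M - k) * t ^ k = t ^ M := by
    rw [← pow_add]; congr 1; omega
  calc (starRingEnd ℂ) (A.coeff k) * (t ^ k * ((starRingEnd ℂ) t) ^ k) * t ^ (M-k)
      = (t ^ (M-k) * t ^ k) * ((starRingEnd ℂ) (A.coeff k) * ((starRingEnd ℂ) t) ^ k) := by ring
    _ = t ^ M * ((starRingEnd ℂ) (A.coeff k) * ((starRingEnd ℂ) t) ^ k) := by rw [this]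

lemma coeff_mul_top (f g : Polynomial ℂ) (m k : ℕ) (hf : f.natDegree ≤ m) (hg : g.natDegree ≤ k) :
    (f * g).coeff (m + k) = f.coeff m * g.coeff k := by
  rw [Polynomial.coeff_mul]
  rw [Finset.sum_eq_single (m, k)]
  · rintro ⟨a, b⟩ hab hne
    rw [Finset.HasAntidiagonal.mem_antidiagonal] at hab
    simp only at hne ⊢
    rcases lt_or_ge m a with h | h
    · rw [Polynomial.coeff_eq_zero_of_natDegree_lt (lt_of_le_of_lt hf h), zero_mul]
    · have : k < b := by
        rcases lt_or_eq_of_le h with h' | h'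
        · omega
        · exfalso; apply hne; subst h'; simp; omega
      rw [Polynomial.coeff_eq_zero_of_natDegree_lt (lt_of_le_of_lt hg this), mul_zero]
  · intro h
    rw [Finset.HasAntidiagonal.mem_antidiagonal] at h
    exact absurd rfl h
  

lemma one_var_key {N : ℕ} (P : Fin N → Polynomial ℂ) (Q : Polynomial ℂ)
    (b : ℕ) (hb : Q.natDegree = b)
    (hdeg : ∀ i, (P i).natDegree ≤ b)
    (r R : ℝ) (hr : 0 < r)
    (h : ∀ t : ℂ, ‖t‖ = r → ∑ i, Complex.normSq ((P i).eval t)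
        = R ^ 2 * Complex.normSq (Q.eval t)) :
    (∑ i, (P i).coeff b * (starRingEnd ℂ) ((P i).coeff 0))
      = (R:ℂ) ^ 2 * (Q.coeff b * (starRingEnd ℂ) (Q.coeff 0)) := by
  set c : ℂ := (r:ℂ)^2 with hc
  set F : Polynomial ℂ :=
    (∑ i, P i * mir (P i) c b) - Polynomial.C ((R:ℂ)^2) * (Q * mir Q c b) with hF
  have hF0 : F = 0 := by
    apply poly_zero_of_circle F r hr
    intro t ht
    rw [hF]
    simp only [Polynomial.eval_sub, Polynomial.eval_mul, Polynomial.eval_finset_sum,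
      Polynomial.eval_C]
    have hterm : ∀ i, (P i).eval t * (mir (P i) c b).eval t
        = t ^ b * ((Complex.normSq ((P i).eval t) : ℂ)) := by
      intro i
      rw [hc, mir_eval (P i) r b (hdeg i) t ht, ← Complex.mul_conj]
      ring
    have hQt : Q.eval t * (mir Q c b).eval t = t ^ b * ((Complex.normSq (Q.eval t) : ℂ)) := by
      rw [hc, mir_eval Q r b hb.le t ht, ← Complex.mul_conj]
      ring
    rw [Finset.sum_congr rfl (fun i _ => hterm i), ← Finset.mul_sum, hQt]
    have := h t ht
    have hcast : (∑ i, (Complex.normSq ((P i).eval t) : ℂ))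
        = ((R:ℂ)^2) * (Complex.normSq (Q.eval t) : ℂ) := by
      push_cast
      exact_mod_cast congrArg (fun x : ℝ => (x : ℂ)) this
    rw [hcast]
    ring
  have hcoeff := congrArg (fun G : Polynomial ℂ => G.coeff (b + b)) hF0
  simp only [hF, Polynomial.coeff_sub, Polynomial.finset_sum_coeff, Polynomial.coeff_zero,
    Polynomial.coeff_C_mul] at hcoeff
  have h1 : ∀ i, (P i * mir (P i) c b).coeff (b + b)
      = (P i).coeff b * (starRingEnd ℂ) ((P i).coeff 0) := by
    intro i
    rw [coeff_mul_top _ _ b b (hdeg i) (mir_natDegree_le _ _ _), mir_coeff_top]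
  have h2 : (Q * mir Q c b).coeff (b + b) = Q.coeff b * (starRingEnd ℂ) (Q.coeff 0) := by
    rw [coeff_mul_top _ _ b b hb.le (mir_natDegree_le _ _ _), mir_coeff_top]
  rw [Finset.sum_congr rfl (fun i _ => h1 i), h2] at hcoeff
  linear_combination hcoeff

lemma one_var (N : ℕ) (P : Fin N → Polynomial ℂ) (Q : Polynomial ℂ)
    (hQ0 : Q.coeff 0 ≠ 0)
    (hdeg : ∀ i, (P i).natDegree ≤ Q.natDegree)
    (r₁ r₂ R₁ R₂ : ℝ) (hr₁ : 0 < r₁) (hr₂ : 0 < r₂)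
    (hRne : R₁ ^ 2 ≠ R₂ ^ 2)
    (h1 : ∀ t : ℂ, ‖t‖ = r₁ → ∑ i, Complex.normSq ((P i).eval t)
        = R₁ ^ 2 * Complex.normSq (Q.eval t))
    (h2 : ∀ t : ℂ, ‖t‖ = r₂ → ∑ i, Complex.normSq ((P i).eval t)
        = R₂ ^ 2 * Complex.normSq (Q.eval t)) : False := by
  have hQne : Q ≠ 0 := fun h => hQ0 (by simp [h])
  have k1 := one_var_key P Q Q.natDegree rfl hdeg r₁ R₁ hr₁ h1
  have k2 := one_var_key P Q Q.natDegree rfl hdeg r₂ R₂ hr₂ h2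
  have : ((R₁:ℂ)^2 - (R₂:ℂ)^2) * (Q.coeff Q.natDegree * (starRingEnd ℂ) (Q.coeff 0)) = 0 := by
    linear_combination k2 - k1
  have hlead : Q.coeff Q.natDegree ≠ 0 := Polynomial.leadingCoeff_ne_zero.mpr hQne
  have hconj : (starRingEnd ℂ) (Q.coeff 0) ≠ 0 := by
    simpa using hQ0
  have hR : ((R₁:ℂ)^2 - (R₂:ℂ)^2) ≠ 0 := by
    intro h
    apply hRne
    have : ((R₁^2 : ℝ) : ℂ) = ((R₂^2 : ℝ) : ℂ) := by push_cast; linear_combination h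
    exact_mod_cast this
  rcases mul_eq_zero.mp this with h | h
  · exact hR h
  · rcases mul_eq_zero.mp h with h' | h'
    · exact hlead h'
    · exact hconj h'

set_option maxHeartbeats 2000000 in
/-- a nonconstant rational map `p/q` in lowest terms,
holomorphic on the closed ball of radius `max r₁ r₂` and taking the two
distinct zero-centered spheres of radii `r₁, r₂` to zero-centered spheres,
satisfies `deg q < deg p`. -/
theorem denominator_degree_lt {n N : ℕ} (hn : 2 ≤ n)
    (P : Fin N → MvPolynomial (Fin n) ℂ) (q : MvPolynomial (Fin n) ℂ)
    (r₁ r₂ R₁ R₂ : ℝ)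
    (hr₁ : 0 < r₁) (hr₂ : 0 < r₂) (hR₁ : 0 < R₁) (hR₂ : 0 < R₂)
    (hne : r₁ ≠ r₂)
    (hq : ∀ z : EuclideanSpace ℂ (Fin n), ‖z‖ ≤ max r₁ r₂ →
      MvPolynomial.eval (fun i => z i) q ≠ 0)
    (hlowest : ∀ d : MvPolynomial (Fin n) ℂ, d ∣ q → (∀ i, d ∣ P i) → IsUnit d)
    (hsphere₁ : ∀ z : EuclideanSpace ℂ (Fin n), ‖z‖ = r₁ → ‖ratMap P q z‖ = R₁)
    (hsphere₂ : ∀ z : EuclideanSpace ℂ (Fin n), ‖z‖ = r₂ → ‖ratMap P q z‖ = R₂)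
    (hnonconst : ¬ ∃ w : EuclideanSpace ℂ (Fin N),
      ∀ z : EuclideanSpace ℂ (Fin n),
        MvPolynomial.eval (fun i => z i) q ≠ 0 → ratMap P q z = w) :
    q.totalDegree < Finset.univ.sup (fun i => (P i).totalDegree) := by
  have hn0 : 0 < n := by omega
  by_cases hRR : R₁ = R₂
  · -- equal radii of target spheres: map is constant, contradiction
    exfalso
    apply hnonconst
    rcases hne.lt_or_gt with h12 | h21
    · refine constant_of_eq_radii hn0 P q r₁ r₂ R₁ hr₁ h12
        (fun z hz => hq z (hz.trans (le_max_right r₁ r₂))) hsphere₁ ?_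
      intro z hz
      rw [hsphere₂ z hz, hRR]
    · refine constant_of_eq_radii hn0 P q r₂ r₁ R₂ hr₂ h21
        (fun z hz => hq z (hz.trans (le_max_left r₁ r₂))) hsphere₂ ?_
      intro z hz
      rw [hsphere₁ z hz, ← hRR]
  · -- distinct target radii: restrict to a generic line and compare coefficients
    by_contra hcon
    push_neg at hcon
    -- q ≠ 0
    have hq0 : MvPolynomial.eval (fun i => (0 : EuclideanSpace ℂ (Fin n)) i) q ≠ 0 := by
      apply hq 0
      have : ‖(0 : EuclideanSpace ℂ (Fin n))‖ = 0 := norm_zero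
      rw [this]
      exact le_max_of_le_left hr₁.le
    have hqne : q ≠ 0 := by
      intro h
      apply hq0
      rw [h, map_zero]
    obtain ⟨v, hv0, hvtop⟩ := exists_good_dir hn0 q hqne
    set V : EuclideanSpace ℂ (Fin n) := (WithLp.equiv 2 (Fin n → ℂ)).symm v with hV
    have hVcoord : ∀ j, V j = v j := fun j => rfl
    have hVne : V ≠ 0 := by
      intro h
      apply hv0
      funext j
      rw [← hVcoord j, h]
      rfl
    have hVpos : (0:ℝ) < ‖V‖ := norm_pos_iff.mpr hVne
    set Qp : Polynomial ℂ := lineComp q v with hQp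
    have hQ0 : Qp.coeff 0 ≠ 0 := by
      rw [Polynomial.coeff_zero_eq_eval_zero, hQp, eval_lineComp]
      have : (fun j => v j * 0) = (fun i => (0 : EuclideanSpace ℂ (Fin n)) i) := by
        funext j
        rw [mul_zero]
        rfl
      rw [this]
      exact hq0
    have hQd : Qp.natDegree = q.totalDegree := by
      apply le_antisymm (natDegree_lineComp_le q v)
      exact Polynomial.le_natDegree_of_ne_zero hvtop
    have hPdeg : ∀ i, (lineComp (P i) v).natDegree ≤ Qp.natDegree := by
      intro i
      refine (natDegree_lineComp_le (P i) v).trans ?_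
      rw [hQd]
      exact le_trans (Finset.le_sup (f := fun i => (P i).totalDegree) (Finset.mem_univ i)) hcon
    -- the circle identities
    have key : ∀ (r R : ℝ), 0 < r → r ≤ max r₁ r₂ →
        (∀ z : EuclideanSpace ℂ (Fin n), ‖z‖ = r → ‖ratMap P q z‖ = R) →
        ∀ t : ℂ, ‖t‖ = r / ‖V‖ →
          ∑ i, Complex.normSq ((lineComp (P i) v).eval t)
            = R ^ 2 * Complex.normSq (Qp.eval t) := by
      intro r R hr hrle hs t ht
      set z : EuclideanSpace ℂ (Fin n) := t • V with hz
      have hznorm : ‖z‖ = r := by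
        rw [hz, norm_smul, ht]
        exact div_mul_cancel₀ r hVpos.ne' 
      have hqz : MvPolynomial.eval (fun i => z i) q ≠ 0 := hq z (by rw [hznorm]; exact hrle)
      have hRz := hs z hznorm
      have hnorm : ‖evalPoly P z‖ = R * ‖MvPolynomial.eval (fun i => z i) q‖ := by
        have h0 : ratMap P q z = (MvPolynomial.eval (fun i => z i) q)⁻¹ • evalPoly P z := rfl
        rw [h0, norm_smul, norm_inv] at hRz
        have hnq : ‖MvPolynomial.eval (fun i => z i) q‖ ≠ 0 := norm_ne_zero_iff.mpr hqz
        rw [inv_mul_eq_div, div_eq_iff hnq] at hRz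
        rw [hRz]
      have harg : (fun j => v j * t) = (fun j => z j) := by
        funext j
        rw [hz, PiLp.smul_apply, smul_eq_mul, hVcoord j, mul_comm]
      have hcoord : ∀ i, (lineComp (P i) v).eval t
          = MvPolynomial.eval (fun j => z j) (P i) := by
        intro i
        rw [eval_lineComp, harg]
      have hQt : Qp.eval t = MvPolynomial.eval (fun j => z j) q := by
        rw [hQp, eval_lineComp, harg]
      have hnn : (0:ℝ) ≤ ∑ i, ‖evalPoly P z i‖ ^ 2 := by positivity
      have hsum : ∑ i, ‖evalPoly P z i‖ ^ 2 = ‖evalPoly P z‖ ^ 2 := by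
        rw [EuclideanSpace.norm_eq]
        exact (Real.sq_sqrt hnn).symm
      calc ∑ i, Complex.normSq ((lineComp (P i) v).eval t)
          = ∑ i, ‖evalPoly P z i‖ ^ 2 := by
            apply Finset.sum_congr rfl
            intro i _
            rw [hcoord i, Complex.normSq_eq_norm_sq]
            rfl
        _ = ‖evalPoly P z‖ ^ 2 := hsum
        _ = R ^ 2 * Complex.normSq (Qp.eval t) := by
            rw [hnorm, hQt, Complex.normSq_eq_norm_sq]
            ring
    have hRne : R₁ ^ 2 ≠ R₂ ^ 2 := by
      intro h
      apply hRR
      nlinarith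
    exact one_var N (fun i => lineComp (P i) v) Qp hQ0 hPdeg
      (r₁ / ‖V‖) (r₂ / ‖V‖) R₁ R₂ (by positivity) (by positivity) hRne
      (key r₁ R₁ hr₁ (le_max_left _ _) hsphere₁)
      (key r₂ R₂ hr₂ (le_max_right _ _) hsphere₂)
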